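/- For (d,k,l,r)-constrained binary sequences of length n, the minimal achievable weight is: 0 if n ≤ min(l,r); 1 if min(l,r) < n ≤ l+r+1; and ⌈(n-l-r-1)/(k+1)⌉ + 1 if n > l+r+1. The maximal achievable weight is ⌈n/(d+1)⌉. -/

import Mathlib

/-- Weight of a binary sequence: number of ones. -/
def wt (l : List Bool) : ℕ := l.count true

/-- Length of the leading run of zeros. -/
def leadZeros (l : List Bool) : ℕ := (l.takeWhile (fun b => !b)).length

/-- Length of the trailing run of zeros. -/
def trailZeros (l : List Bool) : ℕ := (l.reverse.takeWhile (fun b => !b)).length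

/-- Every internal run of zeros (between two consecutive ones) has length in `[d, k]`. -/
def internalOK (d k : ℕ) (l : List Bool) : Prop :=
  ∀ i j : ℕ, i < j → j < l.length → l.getD i false = true → l.getD j false = true →
    (∀ m, i < m → m < j → l.getD m false = false) →
    d ≤ j - i - 1 ∧ j - i - 1 ≤ k

/-- NRZI charge accumulator: current bipolar level `z`, remaining bits. -/
def chargeAux : ℤ → List Bool → ℤ
  | _, [] => 0
  | z, b :: t => (if b then -z else z) + chargeAux (if b then -z else z) t

/-- NRZI charge (digital sum) of a binary sequence. -/
def charge (l : List Bool) : ℤ := chargeAux 1 l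

/-- Number of (d,k,r)-sequences of length n and weight ν beginning with a one
(the empty sequence is allowed, giving `A 0 0 = 1`). -/
noncomputable def Adkr (d k r n ν : ℕ) : ℕ :=
  Nat.card {l : List Bool // l.length = n ∧ (l ≠ [] → l.head? = some true) ∧
    internalOK d k l ∧ trailZeros l ≤ r ∧ wt l = ν}

/-- Number of (d,k,l,r)-sequences of length n and weight ν. -/
noncomputable def Adklr (d k L r n ν : ℕ) : ℕ :=
  Nat.card {x : List Bool // x.length = n ∧ leadZeros x ≤ L ∧
    internalOK d k x ∧ trailZeros x ≤ r ∧ wt x = ν}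

/-- Number of (d,k,r)-sequences of length n beginning with a one, with NRZI charge σ. -/
noncomputable def Cdkr (d k r n : ℕ) (σ : ℤ) : ℕ :=
  Nat.card {l : List Bool // l.length = n ∧ (l ≠ [] → l.head? = some true) ∧
    internalOK d k l ∧ trailZeros l ≤ r ∧ charge l = σ}

/-- Number of (d,k,l,r)-sequences of length n with NRZI charge σ. -/
noncomputable def Cdklr (d k L r n : ℕ) (σ : ℤ) : ℕ :=
  Nat.card {x : List Bool // x.length = n ∧ leadZeros x ≤ L ∧
    internalOK d k x ∧ trailZeros x ≤ r ∧ charge x = σ}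

/-- Binomial coefficient with integer upper argument; zero when the upper argument is negative. -/
def ibin (a : ℤ) (b : ℕ) : ℤ := if 0 ≤ a then (a.toNat.choose b : ℤ) else 0

/-! A word of weight `m + 1` has the form `0^a 1 0^g₁ 1 ⋯ 0^gₘ 1 0^c` (`replicate a false ++
fromGaps [g₁, …, gₘ] c`); it is a (d,k,L,r)-sequence iff `a ≤ L`, `c ≤ r` and every `gᵢ ∈ [d, k]`,
and its length is `a + c + m + 1 + ∑ gᵢ`. Sums of `m` gaps in `[d, k]` fill exactly `[m d, m k]`, so
weight `m + 1` occurs iff `m (d + 1) + 1 ≤ n ≤ m (k + 1) + 1 + L + r`, while weight `0` (the zero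
word) occurs iff `n ≤ min L r`. Hence the achievable weights form the interval
`[⌈(n - L - r - 1) / (k + 1)⌉ + 1, ⌈n / (d + 1)⌉]`, together with `0` when `n ≤ min L r`. -/

open List

def weights (d k L r n : ℕ) : Set ℕ :=
  {ν | ∃ x : List Bool, x.length = n ∧ leadZeros x ≤ L ∧ internalOK d k x ∧ trailZeros x ≤ r ∧
    wt x = ν}

lemma List.takeWhile_append_of_exists_not {α : Type*} {p : α → Bool} {A : List α} (B : List α)
    (h : ∃ a ∈ A, p a = false) : (A ++ B).takeWhile p = A.takeWhile p := by
  induction A with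
  | nil => simp at h
  | cons a A ih =>
    by_cases hpa : p a
    · obtain ⟨b, hb, hpb⟩ := h
      have hbA : b ∈ A := (mem_cons.mp hb).resolve_left fun hba => by simp_all
      simp [hpa, ih ⟨b, hbA, hpb⟩]
    · simp [hpa]

lemma leadZeros_replicate (n : ℕ) : leadZeros (replicate n false) = n := by
  simp [leadZeros]

lemma trailZeros_replicate (n : ℕ) : trailZeros (replicate n false) = n := by
  simp [trailZeros]

lemma leadZeros_replicate_append_true_cons (a : ℕ) (z : List Bool) :
    leadZeros (replicate a false ++ true :: z) = a := by
  simp [leadZeros, takeWhile_append_of_pos]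

lemma trailZeros_append_of_true_mem (u : List Bool) {v : List Bool} (hv : true ∈ v) :
    trailZeros (u ++ v) = trailZeros v := by
  rw [trailZeros, reverse_append, takeWhile_append_of_exists_not _ ⟨true, by simpa using hv, rfl⟩,
    trailZeros]

lemma trailZeros_true_cons_replicate (c : ℕ) : trailZeros (true :: replicate c false) = c := by
  simp [trailZeros, takeWhile_append_of_pos]

lemma wt_replicate_append (a : ℕ) (y : List Bool) : wt (replicate a false ++ y) = wt y := by
  simp [wt, count_replicate]

lemma eq_replicate_of_wt_eq_zero {x : List Bool} (h : wt x = 0) :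
    x = replicate x.length false :=
  eq_replicate_of_mem fun b hb => by
    cases b
    · rfl
    · exact absurd hb (count_eq_zero.mp h)

lemma getD_replicate_false_append (a : ℕ) (y : List Bool) (m : ℕ) :
    (replicate a false ++ y).getD m false = if m < a then false else y.getD (m - a) false := by
  split_ifs with h
  · rw [getD_append _ _ _ _ (by simpa using h)]; simp
  · rw [getD_append_right _ _ _ _ (by simpa using h), length_replicate]

lemma getD_true_cons_replicate_append (g : ℕ) (y : List Bool) (m : ℕ) :
    (true :: (replicate g false ++ y)).getD m false =
      if m = 0 then true else if m ≤ g then false else y.getD (m - g - 1) false := by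
  cases m with
  | zero => rfl
  | succ m =>
    rw [getD_cons_succ, getD_replicate_false_append]
    simp only [Nat.add_one_ne_zero, if_false, Nat.add_one_le_iff]
    rw [show m + 1 - g - 1 = m - g by omega]

lemma internalOK_replicate (d k n : ℕ) : internalOK d k (replicate n false) := by
  intro _ j _ _ _ hj
  simp at hj

lemma internalOK_true_cons_replicate (d k c : ℕ) : internalOK d k (true :: replicate c false) := by
  intro i j hij _ _ hj _
  obtain ⟨j, rfl⟩ : ∃ j', j = j' + 1 := ⟨j - 1, by omega⟩
  simp at hj

lemma internalOK_false_cons_iff {d k : ℕ} {y : List Bool} :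
    internalOK d k (false :: y) ↔ internalOK d k y := by
  constructor
  · intro h i j hij hj hi hj' hbet
    have := h (i + 1) (j + 1) (by omega) (by simpa using hj) hi hj' fun m h1 h2 => by
      obtain ⟨m, rfl⟩ : ∃ m', m = m' + 1 := ⟨m - 1, by omega⟩
      exact hbet m (by omega) (by omega)
    omega
  · intro h i j hij hj hi hj' hbet
    obtain ⟨i, rfl⟩ : ∃ i', i = i' + 1 := ⟨i - 1, by cases i <;> simp_all⟩
    obtain ⟨j, rfl⟩ : ∃ j', j = j' + 1 := ⟨j - 1, by omega⟩
    have := h i j (by omega) (by simpa using hj) hi hj' fun m h1 h2 =>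
      hbet (m + 1) (by omega) (by omega)
    omega

lemma internalOK_replicate_append_iff {d k : ℕ} (a : ℕ) {y : List Bool} :
    internalOK d k (replicate a false ++ y) ↔ internalOK d k y := by
  induction a with
  | zero => rfl
  | succ a ih => rw [replicate_succ, cons_append, internalOK_false_cons_iff, ih]

lemma getD_true_cons_replicate_append_add (g : ℕ) (y : List Bool) (m : ℕ) :
    (true :: (replicate g false ++ y)).getD (m + g + 1) false = y.getD m false := by
  rw [getD_cons_succ, getD_append_right _ _ _ _ (by simp), length_replicate, Nat.add_sub_cancel]

lemma internalOK_true_cons_replicate_append_iff {d k g : ℕ} {z : List Bool} :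
    internalOK d k (true :: (replicate g false ++ true :: z)) ↔
      (d ≤ g ∧ g ≤ k) ∧ internalOK d k (true :: z) := by
  constructor
  · intro h
    refine ⟨?_, fun i j hij hj hi hj' hbet => ?_⟩
    · have := h 0 (g + 1) (by omega) (by simp) rfl (by simp) fun m h1 h2 => by rw [getD_true_cons_replicate_append, if_neg (by omega), if_pos (by omega)]
      omega
    · have := h (i + g + 1) (j + g + 1) (by omega) (by simp at hj ⊢; omega)
        (by rwa [getD_true_cons_replicate_append_add]) (by rwa [getD_true_cons_replicate_append_add])
        fun m h1 h2 => by
          obtain ⟨m, rfl⟩ : ∃ m', m = m' + g + 1 := ⟨m - g - 1, by omega⟩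
          rw [getD_true_cons_replicate_append_add]
          exact hbet m (by omega) (by omega)
      omega
  · rintro ⟨hg, h⟩ i j hij hj hi hj' hbet
    simp only [length_cons, length_append, length_replicate] at hj
    have past_gap : ∀ m, (true :: (replicate g false ++ true :: z)).getD m false = true → m ≠ 0 →
        ∃ m', m = m' + g + 1 := fun m hm hm0 => by
      rw [getD_true_cons_replicate_append] at hm
      refine ⟨m - g - 1, ?_⟩
      split_ifs at hm <;> simp_all
      omega
    obtain ⟨j, rfl⟩ := past_gap j hj' (by omega)
    rw [getD_true_cons_replicate_append_add] at hj'
    by_cases hi0 : i = 0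
    · subst hi0
      obtain rfl : j = 0 := by
        by_contra hj0
        simpa using hbet (g + 1) (by omega) (by omega)
      omega
    · obtain ⟨i, rfl⟩ := past_gap i hi hi0
      rw [getD_true_cons_replicate_append_add] at hi
      have := h i j (by omega) (by simp; omega) hi hj' fun m h1 h2 => by
        rw [← getD_true_cons_replicate_append_add g]
        exact hbet (m + g + 1) (by omega) (by omega)
      omega

def fromGaps : List ℕ → ℕ → List Bool
  | [], c => true :: replicate c false
  | g :: gs, c => true :: (replicate g false ++ fromGaps gs c)

lemma exists_fromGaps_eq_true_cons (gs : List ℕ) (c : ℕ) : ∃ z, fromGaps gs c = true :: z := by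
  cases gs <;> exact ⟨_, rfl⟩

lemma length_fromGaps (gs : List ℕ) (c : ℕ) :
    (fromGaps gs c).length = gs.length + gs.sum + c + 1 := by
  induction gs with
  | nil => simp [fromGaps]
  | cons g gs ih =>
    simp only [fromGaps, length_cons, length_append, length_replicate, ih, sum_cons]
    omega

lemma wt_fromGaps (gs : List ℕ) (c : ℕ) : wt (fromGaps gs c) = gs.length + 1 := by
  induction gs with
  | nil => simp [fromGaps, wt, count_replicate]
  | cons g gs ih => simp_all [fromGaps, wt, count_replicate]

lemma trailZeros_fromGaps (gs : List ℕ) (c : ℕ) : trailZeros (fromGaps gs c) = c := by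
  induction gs with
  | nil => exact trailZeros_true_cons_replicate c
  | cons g gs ih =>
    obtain ⟨z, hz⟩ := exists_fromGaps_eq_true_cons gs c
    rw [fromGaps, ← cons_append, trailZeros_append_of_true_mem _ (by simp [hz]), ih]

lemma internalOK_fromGaps_iff {d k : ℕ} (gs : List ℕ) (c : ℕ) :
    internalOK d k (fromGaps gs c) ↔ ∀ g ∈ gs, d ≤ g ∧ g ≤ k := by
  induction gs with
  | nil => exact iff_of_true (internalOK_true_cons_replicate d k c) (by simp)
  | cons g gs ih =>
    obtain ⟨z, hz⟩ := exists_fromGaps_eq_true_cons gs c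
    rw [fromGaps, hz, internalOK_true_cons_replicate_append_iff, ← hz, ih, forall_mem_cons]

lemma exists_eq_replicate_append_fromGaps {x : List Bool} (hx : true ∈ x) :
    ∃ a gs c, x = replicate a false ++ fromGaps gs c := by
  induction x with
  | nil => simp at hx
  | cons b y ih =>
    cases b with
    | false =>
      obtain ⟨a, gs, c, rfl⟩ := ih (by simpa using hx)
      exact ⟨a + 1, gs, c, rfl⟩
    | true =>
      by_cases hy : true ∈ y
      · obtain ⟨a, gs, c, rfl⟩ := ih hy
        exact ⟨0, a :: gs, c, rfl⟩
      · refine ⟨0, [], y.length, ?_⟩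
        simpa [fromGaps, eq_replicate_iff] using hy

lemma exists_gaps_iff {d k m S : ℕ} :
    (∃ gs : List ℕ, gs.length = m ∧ (∀ g ∈ gs, d ≤ g ∧ g ≤ k) ∧ gs.sum = S) ↔
      m * d ≤ S ∧ S ≤ m * k := by
  constructor
  · rintro ⟨gs, rfl, hgs, rfl⟩
    exact ⟨by simpa using card_nsmul_le_sum gs d fun g hg => (hgs g hg).1,
      by simpa using sum_le_card_nsmul gs k fun g hg => (hgs g hg).2⟩
  · induction m generalizing S with
    | zero => rintro ⟨-, hS⟩; exact ⟨[], rfl, by simp, by simp at hS; simp [hS]⟩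
    | succ m ih =>
      rintro ⟨h1, h2⟩
      rw [add_one_mul] at h1 h2
      have hdk : d ≤ k := by
        by_contra! hkd
        have := Nat.mul_le_mul_left m hkd.le
        omega
      have := Nat.mul_le_mul_left m hdk
      obtain ⟨gs, hlen, hgs, hsum⟩ := ih (S := S - min k (S - m * d)) ⟨by omega, by omega⟩
      refine ⟨min k (S - m * d) :: gs, by simp [hlen], ?_, by simp [hsum]⟩
      simp only [forall_mem_cons]
      exact ⟨⟨by omega, by omega⟩, hgs⟩

lemma zero_mem_weights_iff {d k L r n : ℕ} : 0 ∈ weights d k L r n ↔ n ≤ min L r := by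
  constructor
  · rintro ⟨x, rfl, hL, -, hr, hwt⟩
    rw [eq_replicate_of_wt_eq_zero hwt, leadZeros_replicate] at hL
    rw [eq_replicate_of_wt_eq_zero hwt, trailZeros_replicate] at hr
    exact le_min hL hr
  · intro h
    exact ⟨replicate n false, length_replicate, by rw [leadZeros_replicate]; omega,
      internalOK_replicate d k n, by rw [trailZeros_replicate]; omega, by simp [wt, count_replicate]⟩

lemma succ_mem_weights_iff_exists_gaps {d k L r n m : ℕ} :
    m + 1 ∈ weights d k L r n ↔ ∃ a ≤ L, ∃ c ≤ r, ∃ gs : List ℕ, gs.length = m ∧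
      (∀ g ∈ gs, d ≤ g ∧ g ≤ k) ∧ a + gs.sum + m + c + 1 = n := by
  constructor
  · rintro ⟨x, rfl, hL, hok, hr, hwt⟩
    obtain ⟨a, gs, c, rfl⟩ := exists_eq_replicate_append_fromGaps (x := x)
      (count_pos_iff.mp (by rw [← wt, hwt]; omega))
    obtain ⟨z, hz⟩ := exists_fromGaps_eq_true_cons gs c
    have hm : gs.length = m := by
      simpa [wt_replicate_append, wt_fromGaps] using hwt
    rw [trailZeros_append_of_true_mem _ (by simp [hz]), trailZeros_fromGaps] at hr
    rw [hz, leadZeros_replicate_append_true_cons] at hL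
    refine ⟨a, hL, c, hr, gs, hm, (internalOK_fromGaps_iff gs c).mp
      ((internalOK_replicate_append_iff a).mp hok), ?_⟩
    simp only [length_append, length_replicate, length_fromGaps, hm]
    omega
  · rintro ⟨a, hL, c, hr, gs, hm, hgs, rfl⟩
    obtain ⟨z, hz⟩ := exists_fromGaps_eq_true_cons gs c
    refine ⟨replicate a false ++ fromGaps gs c, ?_, ?_, ?_, ?_, ?_⟩
    · simp only [length_append, length_replicate, length_fromGaps, hm]
      omega
    · rwa [hz, leadZeros_replicate_append_true_cons]
    · exact (internalOK_replicate_append_iff a).mpr ((internalOK_fromGaps_iff gs c).mpr hgs)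
    · rwa [trailZeros_append_of_true_mem _ (by simp [hz]), trailZeros_fromGaps]
    · rw [wt_replicate_append, wt_fromGaps, hm]

lemma succ_mem_weights_iff {d k L r n m : ℕ} (hk : d ≤ k) :
    m + 1 ∈ weights d k L r n ↔ m * (d + 1) + 1 ≤ n ∧ n ≤ m * (k + 1) + 1 + L + r := by
  have hdk := Nat.mul_le_mul_left m hk
  rw [succ_mem_weights_iff_exists_gaps, mul_add_one, mul_add_one]
  constructor
  · rintro ⟨a, hL, c, hr, gs, hm, hgs, rfl⟩
    have := exists_gaps_iff.mp ⟨gs, hm, hgs, rfl⟩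
    omega
  · rintro ⟨h1, h2⟩
    -- fill the gaps first, then the leading run, and leave the rest to the trailing run
    obtain ⟨gs, hm, hgs, hsum⟩ :=
      (exists_gaps_iff (m := m) (d := d) (k := k) (S := min (n - 1 - m) (m * k))).mpr
        ⟨by omega, by omega⟩
    exact ⟨min L (n - 1 - m - gs.sum), by omega, n - 1 - m - gs.sum - min L (n - 1 - m - gs.sum),
      by omega, gs, hm, hgs, by omega⟩

lemma add_one_le_add_div_add_one_iff (n d m : ℕ) :
    m + 1 ≤ (n + d) / (d + 1) ↔ m * (d + 1) + 1 ≤ n := by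
  rw [Nat.le_div_iff_mul_le (by omega), add_one_mul]
  omega

lemma add_div_add_one_le_iff (a k m : ℕ) : (a + k) / (k + 1) ≤ m ↔ a ≤ m * (k + 1) := by
  rw [← Nat.lt_add_one_iff, Nat.div_lt_iff_lt_mul (by omega), add_one_mul]
  omega

lemma weights_eq {d k L r n : ℕ} (hk : d ≤ k) :
    weights d k L r n = {ν | ν = 0 ∧ n ≤ min L r} ∪
      Set.Icc ((n - L - r - 1 + k) / (k + 1) + 1) ((n + d) / (d + 1)) := by
  ext ν
  cases ν with
  | zero => simp [zero_mem_weights_iff]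
  | succ m =>
    rw [succ_mem_weights_iff hk]
    simp only [Set.mem_union, Set.mem_ofPred_eq, Set.mem_Icc, add_le_add_iff_right,
      add_div_add_one_le_iff, add_one_le_add_div_add_one_iff]
    omega

theorem stmt14 (d k L r n : ℕ) (hk : d ≤ k)
    (hex : ∃ x : List Bool, x.length = n ∧ leadZeros x ≤ L ∧
      internalOK d k x ∧ trailZeros x ≤ r) :
    sInf {ν : ℕ | ∃ x : List Bool, x.length = n ∧ leadZeros x ≤ L ∧
        internalOK d k x ∧ trailZeros x ≤ r ∧ wt x = ν} =
      (if n ≤ min L r then 0 else if n ≤ L + r + 1 then 1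
       else (n - L - r - 1 + k) / (k + 1) + 1) ∧
    sSup {ν : ℕ | ∃ x : List Bool, x.length = n ∧ leadZeros x ≤ L ∧
        internalOK d k x ∧ trailZeros x ≤ r ∧ wt x = ν} = (n + d) / (d + 1) := by
  change sInf (weights d k L r n) = _ ∧ sSup (weights d k L r n) = _
  obtain ⟨x, hlen, hL, hok, hr⟩ := hex
  have hne : wt x ∈ weights d k L r n := ⟨x, hlen, hL, hok, hr, rfl⟩
  rw [weights_eq hk] at hne ⊢
  by_cases h0 : n ≤ min L r
  · have hq : (n - L - r - 1 + k) / (k + 1) = 0 := Nat.div_eq_of_lt (by omega)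
    have hS : {ν | ν = 0 ∧ n ≤ min L r} ∪ Set.Icc (0 + 1) ((n + d) / (d + 1)) =
        Set.Icc 0 ((n + d) / (d + 1)) := by
      ext (_ | ν) <;> simp [h0]
    rw [hq, hS, csInf_Icc (Nat.zero_le _), csSup_Icc (Nat.zero_le _), if_pos h0]
    exact ⟨rfl, rfl⟩
  · have hS : {ν | ν = 0 ∧ n ≤ min L r} = ∅ := by simp [h0]
    rw [hS, Set.empty_union] at hne ⊢
    have hle := Set.nonempty_Icc.mp ⟨_, hne⟩
    rw [csInf_Icc hle, csSup_Icc hle, if_neg h0]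
    refine ⟨?_, rfl⟩
    split_ifs with h1
    · rw [Nat.div_eq_of_lt (by omega)]
    · rfl
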